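/- For every ω ∈ Ω, every t ∈ (0,T] and every σ ∈ [0,1) it holds that ‖Y_t(ω)‖_V ≤ ‖S_{0,t}‖_{L(V)}·‖Y_0(ω)‖_V + C·( sup_{s∈[0,t)} (t−s)^σ ‖S_{⌊s⌋,t}‖_{L(W,V)} )·( ∫_0^t (t−s)^{−σ} (U(O_{⌊s⌋}(ω)))^q ds + (t^{1−σ}/(1−σ))·( 1 + 2^{max{q−1,0}} e^{cqt} ( (U(Y_0(ω)))^q + (∫_0^t R(O_{⌊u⌋}(ω)) du)^q ) ) ), where ‖S_{0,t}‖_{L(V)} denotes the operator norm of v ↦ S_{0,t}(v) as a map from V to V, and where the supremum and the integrals of nonnegative integrands take values in [0,∞] and the inequality is understood in [0,∞]. (Corollary 2.3 of the paper: a priori bound based on bootstrap-type arguments.) -/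

import Mathlib

open MeasureTheory Set

/-- `⌊t⌋_h = max({0, h, −h, 2h, −2h, …} ∩ (−∞, t])` for `h > 0`. -/
noncomputable def hfloor (h t : ℝ) : ℝ := h * (⌊t / h⌋ : ℝ)

/-! On each grid cell `(kh, (k+1)h]` the scheme applies the evolution `S_{kh, t}` once, to
`Y_{kh} + (t - kh) 1_{𝕍 ≤ M/T} F(Y_{kh} + O_{kh})`, so the Lyapunov hypothesis gives
`U(Y_{(k+1)h}) ≤ e^{ch} (U(Y_{kh}) + h R(O_{kh}))`, and a discrete Gronwall inequality bounds
`U(Y_{⌊s⌋})` by `e^{ct} (U(Y_0) + ∫_0^t R(O_{⌊u⌋}) du)`. Inserting this into the growth bound of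
`F` and factoring the weight `(t - s)^σ ‖S_{⌊s⌋, t}‖` out of the integral leaves the singular
kernel `(t - s)^{-σ}`, whose integral over `(0, t)` is `t^{1-σ} / (1 - σ)`. -/

open scoped ENNReal

section hfloor

variable {h : ℝ}

theorem hfloor_eq_of_mem_Ico (hh : 0 < h) {k : ℕ} {s : ℝ} (hs : s ∈ Ico (k * h) ((k + 1) * h)) :
    hfloor h s = k * h := by
  have : ⌊s / h⌋ = k := by
    rw [Int.floor_eq_iff, Int.cast_natCast, le_div_iff₀ hh, div_lt_iff₀ hh]
    exact hs
  rw [hfloor, this, Int.cast_natCast, mul_comm]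

theorem hfloor_le (hh : 0 < h) (s : ℝ) : hfloor h s ≤ s := by
  calc hfloor h s ≤ h * (s / h) := mul_le_mul_of_nonneg_left (Int.floor_le _) hh.le
    _ = s := mul_div_cancel₀ s hh.ne'

theorem exists_natCast_mul_eq_hfloor (hh : 0 ≤ h) {s : ℝ} (hs : 0 ≤ s) :
    ∃ k : ℕ, hfloor h s = k * h :=
  ⟨⌊s / h⌋₊, by rw [hfloor, ← natCast_floor_eq_intCast_floor (div_nonneg hs hh), mul_comm]⟩

theorem hfloor_nonneg (hh : 0 ≤ h) {s : ℝ} (hs : 0 ≤ s) : 0 ≤ hfloor h s := by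
  obtain ⟨k, hk⟩ := exists_natCast_mul_eq_hfloor hh hs
  rw [hk]
  positivity

theorem measurable_comp_hfloor {α : Type*} [MeasurableSpace α] (h : ℝ) (f : ℝ → α) :
    Measurable fun s => f (hfloor h s) :=
  (measurable_of_countable fun n : ℤ => f (h * n)).comp
    (Int.measurable_floor.comp (measurable_id.div_const h))

theorem setIntegral_Ioc_comp_hfloor {E : Type*} [NormedAddCommGroup E] [NormedSpace ℝ E]
    [CompleteSpace E] (hh : 0 < h) (f : ℝ → E) {k : ℕ} {τ : ℝ}
    (hτ : τ ∈ Icc (k * h) ((k + 1) * h)) :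
    ∫ s in Ioc (k * h) τ, f (hfloor h s) = (τ - k * h) • f (k * h) := by
  rw [← setIntegral_congr_set Ico_ae_eq_Ioc,
    setIntegral_congr_fun measurableSet_Ico fun s hs =>
      congrArg f (hfloor_eq_of_mem_Ico hh ⟨hs.1, hs.2.trans_le hτ.2⟩),
    setIntegral_const, Real.volume_real_Ico_of_le hτ.1]

theorem lintegral_Ioc_comp_hfloor (hh : 0 < h) (ρ : ℝ → ℝ≥0∞) (k : ℕ) :
    ∫⁻ u in Ioc 0 (k * h), ρ (hfloor h u) =
      ∑ j ∈ Finset.range k, ENNReal.ofReal h * ρ (j * h) := by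
  induction k with
  | zero => simp
  | succ k ih =>
    have hcell : ∫⁻ u in Ioc (k * h) ((k + 1) * h), ρ (hfloor h u) =
        ENNReal.ofReal h * ρ (k * h) := by
      rw [← setLIntegral_congr Ico_ae_eq_Ioc, setLIntegral_congr_fun measurableSet_Ico
          fun s hs => congrArg ρ (hfloor_eq_of_mem_Ico hh hs),
        setLIntegral_const, Real.volume_Ico, mul_comm]
      ring_nf
    rw [Finset.sum_range_succ, ← ih, Nat.cast_succ, ← hcell,
      ← lintegral_union measurableSet_Ioc (Ioc_disjoint_Ioc_of_le le_rfl),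
      Ioc_union_Ioc_eq_Ioc (by positivity) (by nlinarith)]

end hfloor

theorem ENNReal.discrete_gronwall {φ b : ℕ → ℝ≥0∞} {a : ℝ≥0∞} (ha : 1 ≤ a) {n : ℕ}
    (hstep : ∀ k < n, φ (k + 1) ≤ a * (φ k + b k)) {k : ℕ} (hk : k ≤ n) :
    φ k ≤ a ^ k * (φ 0 + ∑ j ∈ Finset.range k, b j) := by
  induction k with
  | zero => simp
  | succ k ih =>
    calc φ (k + 1) ≤ a * (φ k + b k) := hstep k hk
      _ ≤ a * (a ^ k * (φ 0 + ∑ j ∈ Finset.range k, b j) + a ^ k * b k) := by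
        gcongr
        · exact ih (by omega)
        · exact le_mul_of_one_le_left' (one_le_pow₀ ha)
      _ = a ^ (k + 1) * (φ 0 + ∑ j ∈ Finset.range (k + 1), b j) := by
        rw [Finset.sum_range_succ, pow_succ']
        ring

theorem ENNReal.add_rpow_le_two_rpow_mul (a b : ℝ≥0∞) {q : ℝ} (hq : 0 ≤ q) :
    (a + b) ^ q ≤ ENNReal.ofReal (2 ^ max (q - 1) 0) * (a ^ q + b ^ q) := by
  rcases le_total q 1 with hq1 | hq1
  · rw [max_eq_right (by linarith), Real.rpow_zero, ENNReal.ofReal_one, one_mul]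
    exact ENNReal.rpow_add_le_add_rpow _ _ hq hq1
  · rw [max_eq_left (by linarith), ← ENNReal.ofReal_rpow_of_pos two_pos, ENNReal.ofReal_ofNat]
    exact ENNReal.rpow_add_le_mul_rpow_add_rpow _ _ hq1

theorem ENNReal.rpow_le_of_le_exp_mul_add {x a b : ℝ≥0∞} {c t q : ℝ} (hq : 0 ≤ q)
    (hx : x ≤ ENNReal.ofReal (Real.exp (c * t)) * (a + b)) :
    x ^ q ≤ ENNReal.ofReal (2 ^ max (q - 1) 0 * Real.exp (c * q * t)) * (a ^ q + b ^ q) := by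
  calc x ^ q ≤ (ENNReal.ofReal (Real.exp (c * t)) * (a + b)) ^ q := ENNReal.rpow_le_rpow hx hq
    _ = ENNReal.ofReal (Real.exp (c * q * t)) * (a + b) ^ q := by
      rw [ENNReal.mul_rpow_of_nonneg _ _ hq, ENNReal.ofReal_rpow_of_nonneg (Real.exp_nonneg _) hq,
        ← Real.exp_mul, mul_right_comm]
    _ ≤ ENNReal.ofReal (Real.exp (c * q * t)) *
        (ENNReal.ofReal (2 ^ max (q - 1) 0) * (a ^ q + b ^ q)) := by
      gcongr
      exact ENNReal.add_rpow_le_two_rpow_mul a b hq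
    _ = _ := by
      rw [← mul_assoc, ← ENNReal.ofReal_mul (Real.exp_nonneg _), mul_comm (Real.exp _)]

theorem lintegral_Ioo_sub_rpow_neg {t σ : ℝ} (ht : 0 ≤ t) (hσ : σ < 1) :
    ∫⁻ s in Ioo 0 t, ENNReal.ofReal ((t - s) ^ (-σ)) = ENNReal.ofReal (t ^ (1 - σ) / (1 - σ)) := by
  have hσ' : -1 < -σ := by linarith
  have hint : IntervalIntegrable (fun s : ℝ => (t - s) ^ (-σ)) volume 0 t := by
    simpa using
      ((intervalIntegral.intervalIntegrable_rpow' (a := 0) (b := t) hσ').comp_sub_left t).symm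
  rw [← ofReal_integral_eq_lintegral_ofReal
      (((intervalIntegrable_iff_integrableOn_Ioc_of_le ht).mp hint).mono_set Ioo_subset_Ioc_self)
      ((ae_restrict_iff' measurableSet_Ioo).mpr
        (ae_of_all _ fun s hs => Real.rpow_nonneg (sub_nonneg.mpr hs.2.le) _)),
    setIntegral_congr_set Ioo_ae_eq_Ioc, ← intervalIntegral.integral_of_le ht,
    intervalIntegral.integral_comp_sub_left (fun u : ℝ => u ^ (-σ)), sub_self, sub_zero,
    integral_rpow (Or.inl hσ'), Real.zero_rpow (by linarith), neg_add_eq_sub, sub_zero]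

theorem ofReal_le_rpow_neg_mul_iSup {I : Set ℝ} (a : ℝ → ℝ) {s t σ : ℝ} (hs : s ∈ I)
    (hst : s < t) :
    ENNReal.ofReal (a s) ≤
      ENNReal.ofReal ((t - s) ^ (-σ)) * ⨆ r ∈ I, ENNReal.ofReal ((t - r) ^ σ * a r) := by
  have hts : 0 < t - s := sub_pos.mpr hst
  calc ENNReal.ofReal (a s)
        = ENNReal.ofReal ((t - s) ^ (-σ)) * ENNReal.ofReal ((t - s) ^ σ * a s) := by
        rw [← ENNReal.ofReal_mul (Real.rpow_nonneg hts.le _), ← mul_assoc, Real.rpow_neg hts.le,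
          inv_mul_cancel₀ (Real.rpow_pos_of_pos hts σ).ne', one_mul]
    _ ≤ _ := by
      gcongr
      exact le_biSup (fun r => ENNReal.ofReal ((t - r) ^ σ * a r)) hs

section MildSolution

variable {V W : Type*} [NormedAddCommGroup V] [NormedSpace ℝ V] [NormedAddCommGroup W]
  [NormedSpace ℝ W]

def IsEvolutionFamily (ι : V →L[ℝ] W) (S : ℝ → ℝ → W →L[ℝ] V) (T : ℝ) : Prop :=
  ∀ r₁ r₂ r₃ : ℝ, 0 ≤ r₁ → r₁ < r₂ → r₂ < r₃ → r₃ ≤ T →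
    S r₁ r₃ = (S r₂ r₃).comp (ι.comp (S r₁ r₂))

def IsSteppedMildSolution (ι : V →L[ℝ] W) (S : ℝ → ℝ → W →L[ℝ] V) (T h : ℝ) (g : ℝ → W)
    (y : ℝ → V) : Prop :=
  ∀ τ, 0 < τ → τ ≤ T →
    IntegrableOn (fun s => S (hfloor h s) τ (g (hfloor h s))) (Ioc 0 τ) ∧
      y τ = S 0 τ (ι (y 0)) + ∫ s in Ioc 0 τ, S (hfloor h s) τ (g (hfloor h s))

variable [CompleteSpace V] {ι : V →L[ℝ] W} {S : ℝ → ℝ → W →L[ℝ] V} {T h : ℝ}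

theorem setIntegral_evolution_hfloor_factor (hh : 0 < h)
    (hS : IsEvolutionFamily ι S T)
    {g : ℝ → W} {a τ : ℝ} (haτ : a < τ) (hτ : τ ≤ T)
    (hint : IntegrableOn (fun s => S (hfloor h s) a (g (hfloor h s))) (Ioc 0 a)) :
    ∫ s in Ioc 0 a, S (hfloor h s) τ (g (hfloor h s)) =
      S a τ (ι (∫ s in Ioc 0 a, S (hfloor h s) a (g (hfloor h s)))) := by
  refine Eq.trans ?_ (((S a τ).comp ι).integral_comp_comm hint)
  rw [← setIntegral_congr_set Ioo_ae_eq_Ioc, ← setIntegral_congr_set Ioo_ae_eq_Ioc]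
  refine setIntegral_congr_fun measurableSet_Ioo fun s hs => ?_
  rw [hS _ a τ (hfloor_nonneg hh.le hs.1.le) ((hfloor_le hh s).trans_lt hs.2) haτ hτ]
  rfl

theorem eq_evolution_step_of_mem_Ioc (hh : 0 < h)
    (hS : IsEvolutionFamily ι S T)
    {g : ℝ → W} {y : ℝ → V} (hy : IsSteppedMildSolution ι S T h g y)
    {k : ℕ} {τ : ℝ} (hτ : τ ∈ Ioc (k * h) ((k + 1) * h)) (hτT : τ ≤ T) :
    y τ = S (k * h) τ (ι (y (k * h)) + (τ - k * h) • g (k * h)) := by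
  have hτ0 : 0 < τ := lt_of_le_of_lt (by positivity) hτ.1
  obtain ⟨hint, hyτ⟩ := hy τ hτ0 hτT
  have hlast := setIntegral_Ioc_comp_hfloor hh (fun r => S r τ (g r)) (Ioc_subset_Icc_self hτ)
  rw [hyτ]
  rcases k.eq_zero_or_pos with rfl | hk
  · simp only [CharP.cast_eq_zero, zero_mul, sub_zero] at hlast ⊢
    rw [hlast, map_add, map_smul]
  have ha : 0 < (k : ℝ) * h := by positivity
  obtain ⟨hint_a, hya⟩ := hy _ ha (hτ.1.le.trans hτT)
  rw [← Ioc_union_Ioc_eq_Ioc ha.le hτ.1.le,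
    setIntegral_union (Ioc_disjoint_Ioc_of_le le_rfl) measurableSet_Ioc
      (hint.mono_set (Ioc_subset_Ioc_right hτ.1.le)) (hint.mono_set (Ioc_subset_Ioc_left ha.le)),
    hlast, setIntegral_evolution_hfloor_factor hh hS hτ.1 hτT hint_a, hya,
    hS 0 _ τ le_rfl ha hτ.1 hτT]
  simp only [ContinuousLinearMap.comp_apply, map_add, map_smul, add_assoc]

theorem ofReal_lyapunov_grid_le {U R : V → ℝ} {G : V → V → W} {c : ℝ} (hc : 0 ≤ c) (hh : 0 < h)
    (hS : IsEvolutionFamily ι S T)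
    {y o : ℝ → V} (hy : IsSteppedMildSolution ι S T h (fun r => G (y r) (o r)) y)
    {n : ℕ} (hn : n * h ≤ T)
    (hstep : ∀ u v, ∀ k < n, U (S (k * h) ((k + 1) * h) (ι u + h • G u v)) ≤
      Real.exp (c * h) * (U u + h * R v))
    {k : ℕ} (hk : k ≤ n) :
    ENNReal.ofReal (U (y (k * h))) ≤ ENNReal.ofReal (Real.exp (c * h)) ^ k *
      (ENNReal.ofReal (U (y 0)) + ∫⁻ u in Ioc 0 (k * h), ENNReal.ofReal (R (o (hfloor h u)))) := by
  rw [lintegral_Ioc_comp_hfloor hh (fun r => ENNReal.ofReal (R (o r)))]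
  have key := ENNReal.discrete_gronwall (φ := fun k : ℕ => ENNReal.ofReal (U (y (k * h))))
    (b := fun j : ℕ => ENNReal.ofReal h * ENNReal.ofReal (R (o (j * h))))
    (a := ENNReal.ofReal (Real.exp (c * h)))
    (ENNReal.one_le_ofReal.mpr (Real.one_le_exp (by positivity))) ?_ hk
  · simpa only [Nat.cast_zero, zero_mul] using key
  intro j hj
  have hjn : ((j : ℝ) + 1) * h ≤ T := le_trans (by gcongr; exact_mod_cast hj) hn
  rw [Nat.cast_succ, eq_evolution_step_of_mem_Ioc hh hS hy ⟨by nlinarith, le_rfl⟩ hjn,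
    add_one_mul, add_sub_cancel_left, ← add_one_mul]
  calc ENNReal.ofReal (U _)
        ≤ ENNReal.ofReal (Real.exp (c * h) * (U (y (j * h)) + h * R (o (j * h)))) :=
        ENNReal.ofReal_le_ofReal (hstep _ _ j hj)
    _ ≤ _ := by
      rw [ENNReal.ofReal_mul (Real.exp_nonneg _), ← ENNReal.ofReal_mul hh.le]
      gcongr
      exact ENNReal.ofReal_add_le

theorem ofReal_lyapunov_hfloor_le {U R : V → ℝ} {G : V → V → W} {c : ℝ} (hc : 0 ≤ c) (hh : 0 < h)
    (hS : IsEvolutionFamily ι S T)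
    {y o : ℝ → V} (hy : IsSteppedMildSolution ι S T h (fun r => G (y r) (o r)) y)
    {n : ℕ} (hn : n * h = T)
    (hstep : ∀ u v, ∀ k < n, U (S (k * h) ((k + 1) * h) (ι u + h • G u v)) ≤
      Real.exp (c * h) * (U u + h * R v))
    {s t : ℝ} (hs : s ∈ Ico 0 t) (ht : t ≤ T) :
    ENNReal.ofReal (U (y (hfloor h s))) ≤ ENNReal.ofReal (Real.exp (c * t)) *
      (ENNReal.ofReal (U (y 0)) + ∫⁻ u in Ioc 0 t, ENNReal.ofReal (R (o (hfloor h u)))) := by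
  obtain ⟨k, hk⟩ := exists_natCast_mul_eq_hfloor hh.le hs.1
  have hkt : (k : ℝ) * h ≤ t := hk ▸ (hfloor_le hh s).trans hs.2.le
  have hkn : k ≤ n := by
    have : (k : ℝ) * h ≤ n * h := hkt.trans (ht.trans hn.ge)
    exact_mod_cast le_of_mul_le_mul_right this hh
  rw [hk]
  refine (ofReal_lyapunov_grid_le hc hh hS hy hn.le hstep hkn).trans ?_
  rw [← ENNReal.ofReal_pow (Real.exp_nonneg _), ← Real.exp_nat_mul, ← mul_assoc, mul_comm (k : ℝ) c,
    mul_assoc]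
  gcongr

end MildSolution

theorem ofReal_norm_integral_le_lintegral {α E : Type*} [MeasurableSpace α] {μ : Measure α}
    [NormedAddCommGroup E] [NormedSpace ℝ E] (f : α → E) :
    ENNReal.ofReal ‖∫ a, f a ∂μ‖ ≤ ∫⁻ a, ENNReal.ofReal ‖f a‖ ∂μ := by
  simpa only [ofReal_norm] using enorm_integral_le_lintegral_enorm f

theorem lintegral_ofReal_norm_apply_le {V W : Type*} [NormedAddCommGroup V] [NormedSpace ℝ V]
    [NormedAddCommGroup W] [NormedSpace ℝ W] (A : ℝ → W →L[ℝ] V) {f : ℝ → W} {u v : ℝ → ℝ}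
    {C t σ : ℝ} {E : ℝ≥0∞} (hC : 0 ≤ C) (ht : 0 ≤ t) (hσ : σ < 1) (hu : Measurable u)
    (hf : ∀ s ∈ Ioo 0 t, ‖f s‖ ≤ C * (1 + v s + u s))
    (hv : ∀ s ∈ Ioo 0 t, ENNReal.ofReal (v s) ≤ E) :
    ∫⁻ s in Ioc 0 t, ENNReal.ofReal ‖A s (f s)‖ ≤
      ENNReal.ofReal C * (⨆ s ∈ Ico 0 t, ENNReal.ofReal ((t - s) ^ σ * ‖A s‖)) *
        ((∫⁻ s in Ioc 0 t, ENNReal.ofReal ((t - s) ^ (-σ) * u s)) +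
          ENNReal.ofReal (t ^ (1 - σ) / (1 - σ)) * (1 + E)) := by
  set K := ⨆ s ∈ Ico 0 t, ENNReal.ofReal ((t - s) ^ σ * ‖A s‖)
  have hw : Measurable fun s : ℝ => ENNReal.ofReal ((t - s) ^ (-σ)) := by fun_prop
  have hpt : ∀ s ∈ Ioo 0 t, ENNReal.ofReal ‖A s (f s)‖ ≤ ENNReal.ofReal C * K *
      (ENNReal.ofReal ((t - s) ^ (-σ)) * (1 + E) + ENNReal.ofReal ((t - s) ^ (-σ) * u s)) := by
    intro s hs
    calc ENNReal.ofReal ‖A s (f s)‖ ≤ ENNReal.ofReal (‖A s‖ * (C * (1 + v s + u s))) :=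
          ENNReal.ofReal_le_ofReal <|
            ((A s).le_opNorm (f s)).trans (mul_le_mul_of_nonneg_left (hf s hs) (norm_nonneg _))
      _ ≤ ENNReal.ofReal ‖A s‖ * (ENNReal.ofReal C * (1 + E + ENNReal.ofReal (u s))) := by
        rw [ENNReal.ofReal_mul (norm_nonneg _), ENNReal.ofReal_mul hC]
        gcongr
        refine ENNReal.ofReal_add_le.trans (add_le_add_left (ENNReal.ofReal_add_le.trans ?_) _)
        rw [ENNReal.ofReal_one]
        gcongr
        exact hv s hs
      _ ≤ ENNReal.ofReal ((t - s) ^ (-σ)) * K *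
          (ENNReal.ofReal C * (1 + E + ENNReal.ofReal (u s))) := by
        gcongr
        exact ofReal_le_rpow_neg_mul_iSup (fun r => ‖A r‖) ⟨hs.1.le, hs.2⟩ hs.2
      _ = _ := by
        rw [ENNReal.ofReal_mul (Real.rpow_nonneg (sub_nonneg.mpr hs.2.le) _)]
        ring
  calc ∫⁻ s in Ioc 0 t, ENNReal.ofReal ‖A s (f s)‖
      = ∫⁻ s in Ioo 0 t, ENNReal.ofReal ‖A s (f s)‖ := (setLIntegral_congr Ioo_ae_eq_Ioc).symm
    _ ≤ ∫⁻ s in Ioo 0 t, ENNReal.ofReal C * K *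
          (ENNReal.ofReal ((t - s) ^ (-σ)) * (1 + E) + ENNReal.ofReal ((t - s) ^ (-σ) * u s)) :=
        setLIntegral_mono' measurableSet_Ioo hpt
    _ = ENNReal.ofReal C * K * (ENNReal.ofReal (t ^ (1 - σ) / (1 - σ)) * (1 + E) +
          ∫⁻ s in Ioo 0 t, ENNReal.ofReal ((t - s) ^ (-σ) * u s)) := by
      rw [lintegral_const_mul _ (by fun_prop), lintegral_add_left (by fun_prop),
        lintegral_mul_const _ hw, lintegral_Ioo_sub_rpow_neg ht hσ]
    _ ≤ _ := by
      rw [add_comm (ENNReal.ofReal (t ^ (1 - σ) / (1 - σ)) * (1 + E))]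
      gcongr
      exact Ioo_subset_Ioc_self

theorem stmt2_general
    (T q c C : ℝ) (hT : 0 < T) (hq : 0 < q) (hc : 0 ≤ c) (hC : 0 ≤ C)
    (M : ℕ) (hM : 0 < M)
    {V W : Type*}
    [NormedAddCommGroup V] [NormedSpace ℝ V] [CompleteSpace V]
    [NormedAddCommGroup W] [NormedSpace ℝ W]
    (ι : V →L[ℝ] W)
    (U R Vm : V → ℝ)
    (hU0 : ∀ v, 0 ≤ U v)
    (F : V → W)
    (S : ℝ → ℝ → (W →L[ℝ] V))
    (hFgrowth : ∀ u v : V, ‖F (u + v)‖ ≤ C * (1 + U u ^ q + U v ^ q))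
    (hSsemi : ∀ r1 r2 r3 : ℝ, 0 ≤ r1 → r1 < r2 → r2 < r3 → r3 ≤ T →
      S r1 r3 = (S r2 r3).comp (ι.comp (S r1 r2)))
    (hLyap : ∀ u v : V, ∀ k : ℕ, k < M → ∀ t : ℝ,
      (k : ℝ) * T / M < t → t ≤ ((k : ℝ) + 1) * T / M →
      U (S ((k : ℝ) * T / M) t
          (ι u + (t - (k : ℝ) * T / M) •
            (if Vm (u + v) ≤ (M : ℝ) / T then F (u + v) else 0)))
        ≤ Real.exp (c * (t - (k : ℝ) * T / M)) * (U u + (t - (k : ℝ) * T / M) * R v))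
    {Ω : Type*}
    (O Y : ℝ → Ω → V)
    (hYint : ∀ ω : Ω, ∀ t : ℝ, 0 < t → t ≤ T →
      IntegrableOn
        (fun s => S (hfloor (T / M) s) t
          (if Vm (Y (hfloor (T / M) s) ω + O (hfloor (T / M) s) ω) ≤ (M : ℝ) / T
            then F (Y (hfloor (T / M) s) ω + O (hfloor (T / M) s) ω) else 0))
        (Set.Ioc 0 t))
    (hYeq : ∀ ω : Ω, ∀ t : ℝ, 0 < t → t ≤ T →
      Y t ω = S 0 t (ι (Y 0 ω)) +
        ∫ s in Set.Ioc (0 : ℝ) t, S (hfloor (T / M) s) t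
          (if Vm (Y (hfloor (T / M) s) ω + O (hfloor (T / M) s) ω) ≤ (M : ℝ) / T
            then F (Y (hfloor (T / M) s) ω + O (hfloor (T / M) s) ω) else 0)) :
    ∀ ω : Ω, ∀ t : ℝ, 0 < t → t ≤ T → ∀ σ : ℝ, σ ∈ Set.Ico (0 : ℝ) 1 →
      ENNReal.ofReal ‖Y t ω‖ ≤
        ENNReal.ofReal (‖(S 0 t).comp ι‖ * ‖Y 0 ω‖) +
          ENNReal.ofReal C *
            (⨆ s ∈ Set.Ico (0 : ℝ) t,
              ENNReal.ofReal ((t - s) ^ σ * ‖S (hfloor (T / M) s) t‖)) *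
            ((∫⁻ s in Set.Ioc (0 : ℝ) t,
                ENNReal.ofReal ((t - s) ^ (-σ) * U (O (hfloor (T / M) s) ω) ^ q)) +
              ENNReal.ofReal (t ^ (1 - σ) / (1 - σ)) *
                (1 + ENNReal.ofReal (2 ^ max (q - 1) 0 * Real.exp (c * q * t)) *
                  (ENNReal.ofReal (U (Y 0 ω) ^ q) +
                    (∫⁻ u in Set.Ioc (0 : ℝ) t,
                      ENNReal.ofReal (R (O (hfloor (T / M) u) ω))) ^ q))) := by
  intro ω t ht htT σ hσ
  have hM' : (0 : ℝ) < M := Nat.cast_pos.mpr hM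
  have hh : 0 < T / M := div_pos hT hM'
  have hstep : ∀ u v, ∀ k < M, U (S (k * (T / M)) ((k + 1) * (T / M))
      (ι u + (T / M) • if Vm (u + v) ≤ (M : ℝ) / T then F (u + v) else 0)) ≤
      Real.exp (c * (T / M)) * (U u + T / M * R v) := by
    intro u v k hk
    have hL := hLyap u v k hk ((k + 1) * T / M) (by gcongr; linarith) le_rfl
    rwa [show ((k : ℝ) + 1) * T / M - k * T / M = T / M by ring, mul_div_assoc,
      mul_div_assoc] at hL
  have hUY : ∀ s ∈ Ioo 0 t, ENNReal.ofReal (U (Y (hfloor (T / M) s) ω) ^ q) ≤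
      ENNReal.ofReal (2 ^ max (q - 1) 0 * Real.exp (c * q * t)) *
        (ENNReal.ofReal (U (Y 0 ω) ^ q) +
          (∫⁻ u in Ioc 0 t, ENNReal.ofReal (R (O (hfloor (T / M) u) ω))) ^ q) := by
    intro s hs
    rw [← ENNReal.ofReal_rpow_of_nonneg (hU0 _) hq.le,
      ← ENNReal.ofReal_rpow_of_nonneg (hU0 _) hq.le]
    exact ENNReal.rpow_le_of_le_exp_mul_add hq.le <|
      ofReal_lyapunov_hfloor_le
        (G := fun u v => if Vm (u + v) ≤ (M : ℝ) / T then F (u + v) else 0)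
        (y := fun r => Y r ω) (o := fun r => O r ω) hc hh hSsemi
        (fun τ h₀ hτ => ⟨hYint ω τ h₀ hτ, hYeq ω τ h₀ hτ⟩) (mul_div_cancel₀ T hM'.ne') hstep
        ⟨hs.1.le, hs.2⟩ htT
  rw [hYeq ω t ht htT]
  refine (ENNReal.ofReal_le_ofReal (norm_add_le _ _)).trans <| ENNReal.ofReal_add_le.trans <|
    add_le_add (ENNReal.ofReal_le_ofReal (((S 0 t).comp ι).le_opNorm (Y 0 ω))) ?_
  refine (ofReal_norm_integral_le_lintegral _).trans <|
    lintegral_ofReal_norm_apply_le (fun s => S (hfloor (T / M) s) t) hC ht.le hσ.2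
      (measurable_comp_hfloor _ fun r => U (O r ω) ^ q) (fun s _ => ?_) hUY
  split_ifs
  exacts [hFgrowth _ _, norm_zero.trans_le ((norm_nonneg _).trans (hFgrowth _ _))]

theorem stmt2
    (T q c C : ℝ) (hT : 0 < T) (hq : 0 < q) (hc : 0 ≤ c) (hC : 0 ≤ C)
    (M : ℕ) (hM : 0 < M)
    {V W : Type*}
    [NormedAddCommGroup V] [NormedSpace ℝ V] [CompleteSpace V]
    [TopologicalSpace.SeparableSpace V] [MeasurableSpace V] [BorelSpace V]
    [NormedAddCommGroup W] [NormedSpace ℝ W] [CompleteSpace W]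
    [TopologicalSpace.SeparableSpace W] [MeasurableSpace W] [BorelSpace W]
    (ι : V →L[ℝ] W) (hι_inj : Function.Injective ι) (hι_dense : DenseRange ι)
    (U R Vm : V → ℝ)
    (hU0 : ∀ v, 0 ≤ U v) (hR0 : ∀ v, 0 ≤ R v) (hVm0 : ∀ v, 0 ≤ Vm v)
    (hUm : Measurable U) (hRm : Measurable R) (hVmm : Measurable Vm)
    (F : V → W) (hFm : Measurable F)
    (S : ℝ → ℝ → (W →L[ℝ] V))
    (hSm : ∀ w : W, Measurable fun p : ℝ × ℝ => S p.1 p.2 w)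
    (hFgrowth : ∀ u v : V, ‖F (u + v)‖ ≤ C * (1 + U u ^ q + U v ^ q))
    (hSsemi : ∀ r1 r2 r3 : ℝ, 0 ≤ r1 → r1 < r2 → r2 < r3 → r3 ≤ T →
      S r1 r3 = (S r2 r3).comp (ι.comp (S r1 r2)))
    (hLyap : ∀ u v : V, ∀ k : ℕ, k < M → ∀ t : ℝ,
      (k : ℝ) * T / M < t → t ≤ ((k : ℝ) + 1) * T / M →
      U (S ((k : ℝ) * T / M) t
          (ι u + (t - (k : ℝ) * T / M) •
            (if Vm (u + v) ≤ (M : ℝ) / T then F (u + v) else 0)))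
        ≤ Real.exp (c * (t - (k : ℝ) * T / M)) * (U u + (t - (k : ℝ) * T / M) * R v))
    {Ω : Type*} [MeasurableSpace Ω] (P : Measure Ω) [IsProbabilityMeasure P]
    (O Y : ℝ → Ω → V)
    (hYint : ∀ ω : Ω, ∀ t : ℝ, 0 < t → t ≤ T →
      IntegrableOn
        (fun s => S (hfloor (T / M) s) t
          (if Vm (Y (hfloor (T / M) s) ω + O (hfloor (T / M) s) ω) ≤ (M : ℝ) / T
            then F (Y (hfloor (T / M) s) ω + O (hfloor (T / M) s) ω) else 0))
        (Set.Ioc 0 t))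
    (hYeq : ∀ ω : Ω, ∀ t : ℝ, 0 < t → t ≤ T →
      Y t ω = S 0 t (ι (Y 0 ω)) +
        ∫ s in Set.Ioc (0 : ℝ) t, S (hfloor (T / M) s) t
          (if Vm (Y (hfloor (T / M) s) ω + O (hfloor (T / M) s) ω) ≤ (M : ℝ) / T
            then F (Y (hfloor (T / M) s) ω + O (hfloor (T / M) s) ω) else 0)) :
    ∀ ω : Ω, ∀ t : ℝ, 0 < t → t ≤ T → ∀ σ : ℝ, σ ∈ Set.Ico (0 : ℝ) 1 →
      ENNReal.ofReal ‖Y t ω‖ ≤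
        ENNReal.ofReal (‖(S 0 t).comp ι‖ * ‖Y 0 ω‖) +
          ENNReal.ofReal C *
            (⨆ s ∈ Set.Ico (0 : ℝ) t,
              ENNReal.ofReal ((t - s) ^ σ * ‖S (hfloor (T / M) s) t‖)) *
            ((∫⁻ s in Set.Ioc (0 : ℝ) t,
                ENNReal.ofReal ((t - s) ^ (-σ) * U (O (hfloor (T / M) s) ω) ^ q)) +
              ENNReal.ofReal (t ^ (1 - σ) / (1 - σ)) *
                (1 + ENNReal.ofReal (2 ^ max (q - 1) 0 * Real.exp (c * q * t)) *
                  (ENNReal.ofReal (U (Y 0 ω) ^ q) +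
                    (∫⁻ u in Set.Ioc (0 : ℝ) t,
                      ENNReal.ofReal (R (O (hfloor (T / M) u) ω))) ^ q))) :=
  stmt2_general T q c C hT hq hc hC M hM ι U R Vm hU0 F S hFgrowth hSsemi hLyap O Y hYint hYeq
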